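/- For every Schwartz function f : ℝ → ℂ, ∫_ℝ ∫_ℝ |f(x+α) + f(x−α) − 2 f(x)|² / α⁴ dx dα = (32π⁴/3) ∫_ℝ |ξ|³ · |𝓕f(ξ)|² dξ, where 𝓕f(ξ) = ∫_ℝ f(x) e^{-2πi x ξ} dx. -/

import Mathlib

/-!
The second difference `f (x + α) + f (x - α) - 2 f x` has Fourier multiplier
`𝐞 (αξ) + 𝐞 (-αξ) - 2 = -4 sin² (παξ)`, so by Plancherel its squared `L²` norm is
`16 ∫ sin⁴ (παξ) ‖𝓕 f ξ‖² dξ`. After exchanging the integrals, the substitution `u = ξα` gives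
`∫ sin⁴ (παξ) / α⁴ dα = π⁴ |ξ|³ ∫ sinc⁴ (πu) du`, and since `sinc² (πξ)` is the Fourier transform
of the tent `max (1 - |x|) 0`, Plancherel once more gives `∫ sinc⁴ (πu) du = ∫ tent² = 2 / 3`.
-/

open MeasureTheory Real FourierTransform Set
open scoped InnerProductSpace SchwartzMap

theorem fourierChar_add_fourierChar_neg (t : ℝ) :
    (𝐞 t + 𝐞 (-t) : ℂ) = ((2 * cos (2 * π * t) : ℝ) : ℂ) := by
  rw [Real.fourierChar_apply, Real.fourierChar_apply, mul_neg, Complex.ofReal_neg,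
    Complex.exp_mul_I, Complex.exp_mul_I, Complex.cos_neg, Complex.sin_neg]
  push_cast
  ring

namespace SchwartzMap

variable {D E : Type*} [NormedAddCommGroup D] [NormedSpace ℝ D] [NormedAddCommGroup E]
  [NormedSpace ℂ E]

theorem integrable_pow_mul_norm_sq [MeasurableSpace D] [BorelSpace D] [SecondCountableTopology D]
    {F : Type*} [NormedAddCommGroup F] [NormedSpace ℝ F] (μ : Measure D) [μ.HasTemperateGrowth]
    (f : 𝓢(D, F)) (k : ℕ) : Integrable (fun x ↦ ‖x‖ ^ k * ‖f x‖ ^ 2) μ := by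
  have := (f.integrable_pow_mul μ k).mul_bdd f.continuous.norm.aestronglyMeasurable
    (ae_of_all _ fun x ↦ by simpa using norm_le_seminorm ℝ f x)
  simpa [sq, mul_assoc] using this

noncomputable def secondDifference (h : D) (f : 𝓢(D, E)) : 𝓢(D, E) :=
  f.compSubConstCLM ℂ (-h) + f.compSubConstCLM ℂ h - (2 : ℂ) • f

@[simp]
theorem secondDifference_apply (h : D) (f : 𝓢(D, E)) (x : D) :
    secondDifference h f x = f (x + h) + f (x - h) - (2 : ℂ) • f x := by
  simp [secondDifference, sub_eq_add_neg]

end SchwartzMap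

section InnerProductSpace

variable {V : Type*} [NormedAddCommGroup V] [InnerProductSpace ℝ V]
  [FiniteDimensional ℝ V] [MeasurableSpace V] [BorelSpace V]
  {E : Type*} [NormedAddCommGroup E] [NormedSpace ℂ E]

theorem Continuous.integral_norm_sq_fourier {H : Type*} [NormedAddCommGroup H]
    [InnerProductSpace ℂ H] [CompleteSpace H] {f : V → H} (hc : Continuous f)
    (hf : Integrable f) (hFf : Integrable (𝓕 f)) :
    ∫ ξ, ‖𝓕 f ξ‖ ^ 2 = ∫ x, ‖f x‖ ^ 2 := by
  have h := VectorFourier.integral_sesq_fourierIntegral_eq_neg_flip (innerSL ℂ)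
      (L := innerₗ V) continuous_fourierChar continuous_inner hf hFf
  rw [flip_innerₗ] at h
  change ∫ ξ, ⟪𝓕 f ξ, 𝓕 f ξ⟫_ℂ = ∫ x, ⟪f x, 𝓕⁻ (𝓕 f) x⟫_ℂ at h
  rw [hc.fourierInv_fourier_eq hf hFf] at h
  apply Complex.ofRealLI.injective
  simpa [← LinearIsometry.integral_comp_comm, inner_self_eq_norm_sq_to_K] using h

theorem fourier_ofReal_of_even {g : V → ℝ} (hg : Integrable g) (heven : ∀ x, g (-x) = g x)
    (w : V) : 𝓕 (fun x ↦ (g x : ℂ)) w = ∫ x, g x * cos (2 * π * ⟪x, w⟫_ℝ) := by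
  set e : V → ℂ := fun x ↦ 𝐞 (-⟪x, w⟫_ℝ) • (g x : ℂ)
  have he : Integrable e := (Real.fourierIntegral_convergent_iff w).2 hg.ofReal
  calc 𝓕 (fun x ↦ (g x : ℂ)) w = ((∫ x, e x) + ∫ x, e (-x)) / 2 := by
        rw [integral_neg_eq_self, ← two_mul, mul_div_cancel_left₀ _ two_ne_zero]; rfl
    _ = ∫ x, ((g x * cos (2 * π * ⟪x, w⟫_ℝ) : ℝ) : ℂ) := by
      rw [← integral_add he he.comp_neg, ← integral_div]
      congr 1 with x
      simp only [e, inner_neg_left, heven, Circle.smul_def, smul_eq_mul, ← add_mul]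
      rw [fourierChar_add_fourierChar_neg, mul_neg, cos_neg]
      push_cast
      ring
    _ = _ := integral_ofReal

theorem fourier_comp_sub_const (f : V → E) (a w : V) :
    𝓕 (fun x ↦ f (x - a)) w = 𝐞 (-⟪a, w⟫_ℝ) • 𝓕 f w := by
  simp_rw [sub_eq_add_neg]
  refine (congrFun (VectorFourier.fourierIntegral_comp_add_right 𝐞 volume (innerₗ V) f (-a))
    w).trans ?_
  simp only [map_neg, LinearMap.neg_apply, innerₗ_apply_apply]
  rfl

namespace SchwartzMap

theorem fourier_compSubConstCLM (f : 𝓢(V, E)) (a w : V) :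
    𝓕 (f.compSubConstCLM ℂ a) w = 𝐞 (-⟪a, w⟫_ℝ) • 𝓕 f w :=
  fourier_comp_sub_const f a w

theorem fourier_secondDifference (h : V) (f : 𝓢(V, E)) (ξ : V) :
    𝓕 (secondDifference h f) ξ = ((-4 * sin (π * ⟪h, ξ⟫_ℝ) ^ 2 : ℝ) : ℂ) • 𝓕 f ξ := by
  rw [← fourierTransformCLM_apply ℂ, secondDifference, map_sub, map_add, map_smul]
  simp only [sub_apply, add_apply, smul_apply, fourierTransformCLM_apply]
  rw [fourier_compSubConstCLM, fourier_compSubConstCLM, inner_neg_left, neg_neg, Circle.smul_def,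
    Circle.smul_def, ← add_smul, ← sub_smul, fourierChar_add_fourierChar_neg]
  congr 1
  rw [show 2 * π * ⟪h, ξ⟫_ℝ = 2 * (π * ⟪h, ξ⟫_ℝ) by ring, cos_two_mul, cos_sq']
  push_cast
  ring

theorem integral_norm_sq_secondDifference {H : Type*} [NormedAddCommGroup H]
    [InnerProductSpace ℂ H] [CompleteSpace H] (h : V) (f : 𝓢(V, H)) :
    ∫ x, ‖f (x + h) + f (x - h) - (2 : ℂ) • f x‖ ^ 2 =
      16 * ∫ ξ, sin (π * ⟪h, ξ⟫_ℝ) ^ 4 * ‖𝓕 (⇑f) ξ‖ ^ 2 := by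
  have hpl := integral_norm_sq_fourier (secondDifference h f)
  simp only [secondDifference_apply] at hpl
  rw [← hpl, ← integral_const_mul]
  congr 1 with ξ
  rw [fourier_secondDifference, norm_smul, fourier_coe, Complex.norm_real, Real.norm_eq_abs,
    mul_pow, sq_abs]
  ring

end SchwartzMap

end InnerProductSpace

noncomputable def tent (x : ℝ) : ℝ := max (1 - |x|) 0

theorem tent_neg (x : ℝ) : tent (-x) = tent x := by simp [tent]

@[fun_prop]
theorem continuous_tent : Continuous tent := by unfold tent; fun_prop

theorem tent_of_mem_Icc {x : ℝ} (hx : x ∈ Icc (0 : ℝ) 1) : tent x = 1 - x := by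
  simp [tent, abs_of_nonneg hx.1, hx.2]

theorem tent_of_one_le_abs {x : ℝ} (hx : 1 ≤ |x|) : tent x = 0 := by
  simp [tent, hx]

theorem integrable_tent : Integrable tent := by
  refine continuous_tent.integrable_of_hasCompactSupport
    (HasCompactSupport.intro (isCompact_Icc (a := -1) (b := 1)) fun x hx ↦ ?_)
  rw [mem_Icc, ← abs_le, not_le] at hx
  exact tent_of_one_le_abs hx.le

theorem integral_tent_mul_of_even {h : ℝ → ℝ} (heven : ∀ x, h (-x) = h x) :
    ∫ x, tent x * h x = 2 * ∫ t in (0 : ℝ)..1, (1 - t) * h t := by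
  have habs : ∀ x, tent x * h x = tent |x| * h |x| := fun x ↦ by
    rcases abs_choice x with hx | hx <;> rw [hx]
    simp only [tent_neg, heven]
  rw [integral_congr_ae (ae_of_all _ habs), integral_comp_abs (f := fun t ↦ tent t * h t),
    intervalIntegral.integral_of_le zero_le_one,
    setIntegral_eq_of_subset_of_forall_sdiff_eq_zero measurableSet_Ioi Ioc_subset_Ioi_self
      fun t ht ↦ ?_]
  · congr 1
    refine setIntegral_congr_fun measurableSet_Ioc fun t ht ↦ ?_
    simp only [tent_of_mem_Icc (Ioc_subset_Icc_self ht)]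
  · simp only [mem_sdiff, mem_Ioi, mem_Ioc, not_and, not_le] at ht
    rw [tent_of_one_le_abs ((ht.2 ht.1).le.trans (le_abs_self t)), zero_mul]

theorem integral_tent_sq : ∫ x, tent x ^ 2 = 2 / 3 := by
  simp_rw [sq]
  rw [integral_tent_mul_of_even tent_neg, intervalIntegral.integral_congr (g := fun t ↦ (1 - t) ^ 2) fun t ht ↦ by
    rw [uIcc_of_le zero_le_one] at ht; simp [tent_of_mem_Icc ht, sq]]
  rw [intervalIntegral.integral_comp_sub_left (fun t ↦ t ^ 2)]
  norm_num

theorem integral_one_sub_mul_cos {c : ℝ} (hc : c ≠ 0) :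
    ∫ t in (0 : ℝ)..1, (1 - t) * cos (c * t) = (1 - cos c) / c ^ 2 := by
  have hF : ∀ t, HasDerivAt (fun t ↦ (1 - t) * sin (c * t) / c - cos (c * t) / c ^ 2)
      ((1 - t) * cos (c * t)) t := fun t ↦ by
    have hlin : HasDerivAt (fun t ↦ c * t) c t := by simpa using (hasDerivAt_id t).const_mul c
    refine ((((hasDerivAt_id t).const_sub 1).mul hlin.sin).div_const c |>.sub
      (hlin.cos.div_const (c ^ 2))).congr_deriv ?_
    field_simp
    simp only [id]
    ring
  rw [intervalIntegral.integral_eq_sub_of_hasDerivAt (fun t _ ↦ hF t)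
    ((by fun_prop : Continuous fun t ↦ (1 - t) * cos (c * t)).intervalIntegrable _ _)]
  field_simp
  simp only [sub_self, zero_mul, zero_sub, sub_zero, mul_one, mul_zero, sin_zero, cos_zero,
    sub_neg_eq_add]
  ring

theorem integral_tent_mul_cos {ξ : ℝ} (hξ : ξ ≠ 0) :
    ∫ x, tent x * cos (2 * π * ξ * x) = sinc (π * ξ) ^ 2 := by
  rw [integral_tent_mul_of_even fun x ↦ by simp only [mul_neg, cos_neg],
    integral_one_sub_mul_cos (by positivity), sinc_of_ne_zero (by positivity),
    show 2 * π * ξ = 2 * (π * ξ) by ring, cos_two_mul, cos_sq']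
  field_simp
  ring

theorem fourier_tent {ξ : ℝ} (hξ : ξ ≠ 0) :
    𝓕 (fun x ↦ (tent x : ℂ)) ξ = (sinc (π * ξ) ^ 2 : ℝ) := by
  rw [fourier_ofReal_of_even integrable_tent tent_neg]
  simp only [RCLike.inner_apply, conj_trivial, ← mul_assoc]
  rw [integral_tent_mul_cos hξ]

theorem sq_sinc_le (x : ℝ) : sinc x ^ 2 ≤ 2 * (1 + x ^ 2)⁻¹ := by
  have h₁ : sinc x ^ 2 ≤ 1 := by
    rw [sq_le_one_iff_abs_le_one]; exact abs_sinc_le_one x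
  have h₂ : x ^ 2 * sinc x ^ 2 ≤ 1 := by
    rcases eq_or_ne x 0 with rfl | hx
    · simp
    · rw [sinc_of_ne_zero hx, div_pow, mul_div_cancel₀ _ (pow_ne_zero 2 hx)]
      exact sin_sq_le_one x
  rw [← div_eq_mul_inv, le_div_iff₀ (by positivity)]
  linarith

theorem integrable_sq_sinc : Integrable fun x ↦ sinc x ^ 2 :=
  (integrable_inv_one_add_sq.const_mul 2).mono' (continuous_sinc.pow 2).aestronglyMeasurable
    (ae_of_all _ fun x ↦ by rw [Real.norm_eq_abs, abs_sq]; exact sq_sinc_le x)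

theorem integrable_sinc_pow_four : Integrable fun x ↦ sinc x ^ 4 :=
  integrable_sq_sinc.mono' (continuous_sinc.pow 4).aestronglyMeasurable
    (ae_of_all _ fun x ↦ by
      have : sinc x ^ 2 ≤ 1 := by rw [sq_le_one_iff_abs_le_one]; exact abs_sinc_le_one x
      rw [Real.norm_eq_abs, abs_of_nonneg (by positivity)]
      nlinarith [sq_nonneg (sinc x)])

theorem integral_sinc_pi_mul_pow_four : ∫ u, sinc (π * u) ^ 4 = 2 / 3 := by
  have hae : 𝓕 (fun x ↦ (tent x : ℂ)) =ᵐ[volume] fun ξ ↦ ((sinc (π * ξ) ^ 2 : ℝ) : ℂ) := by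
    filter_upwards [Measure.ae_ne volume 0] with ξ hξ using fourier_tent hξ
  have hint : Integrable (𝓕 fun x ↦ (tent x : ℂ)) :=
    (integrable_sq_sinc.comp_mul_left' pi_ne_zero).ofReal.congr hae.symm
  calc ∫ u, sinc (π * u) ^ 4 = ∫ ξ, ‖𝓕 (fun x ↦ (tent x : ℂ)) ξ‖ ^ 2 := by
        refine integral_congr_ae (hae.mono fun ξ h ↦ ?_)
        dsimp only at h ⊢
        rw [h, Complex.norm_real, Real.norm_eq_abs, sq_abs, ← pow_mul]
    _ = ∫ x, tent x ^ 2 := by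
        rw [Continuous.integral_norm_sq_fourier (by fun_prop) integrable_tent.ofReal hint]
        simp only [Complex.norm_real, Real.norm_eq_abs, sq_abs]
    _ = 2 / 3 := integral_tent_sq

theorem sin_pi_mul_pow_four_div_ae_eq (ξ : ℝ) :
    (fun α ↦ sin (π * (ξ * α)) ^ 4 / α ^ 4) =ᵐ[volume]
      fun α ↦ π ^ 4 * ξ ^ 4 * sinc (π * ξ * α) ^ 4 := by
  filter_upwards [Measure.ae_ne volume 0] with α hα
  rcases eq_or_ne ξ 0 with rfl | hξ
  · simp
  rw [sinc_of_ne_zero (by positivity), ← mul_assoc]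
  field_simp

theorem integrable_sin_pi_mul_pow_four_div (ξ : ℝ) :
    Integrable fun α ↦ sin (π * (ξ * α)) ^ 4 / α ^ 4 := by
  refine Integrable.congr ?_ (sin_pi_mul_pow_four_div_ae_eq ξ).symm
  rcases eq_or_ne ξ 0 with rfl | hξ
  · simp
  exact (integrable_sinc_pow_four.comp_mul_left' (by positivity : π * ξ ≠ 0)).const_mul _

theorem integral_sin_pi_mul_pow_four_div (ξ : ℝ) :
    ∫ α, sin (π * (ξ * α)) ^ 4 / α ^ 4 = 2 * π ^ 4 / 3 * |ξ| ^ 3 := by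
  rw [integral_congr_ae (sin_pi_mul_pow_four_div_ae_eq ξ), integral_const_mul]
  rcases eq_or_ne ξ 0 with rfl | hξ
  · simp
  have h := Measure.integral_comp_mul_left (fun u ↦ sinc (π * u) ^ 4) ξ
  simp only [← mul_assoc] at h
  rw [h, integral_sinc_pi_mul_pow_four, smul_eq_mul, abs_inv,
    ← Even.pow_abs (by decide : Even 4) ξ]
  have : |ξ| ≠ 0 := abs_ne_zero.2 hξ
  field_simp

theorem integral_integral_sin_pi_mul_pow_four_mul_div {g : ℝ → ℝ} (hg : AEStronglyMeasurable g)
    (hint : Integrable fun ξ ↦ |ξ| ^ 3 * g ξ) :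
    ∫ α, ∫ ξ, sin (π * (ξ * α)) ^ 4 * g ξ / α ^ 4 = 2 * π ^ 4 / 3 * ∫ ξ, |ξ| ^ 3 * g ξ := by
  have hslice : ∀ ξ c, ∫ α, sin (π * (ξ * α)) ^ 4 * c / α ^ 4 = 2 * π ^ 4 / 3 * (|ξ| ^ 3 * c) :=
    fun ξ c ↦ by
      simp_rw [mul_div_right_comm _ c]
      rw [integral_mul_const, integral_sin_pi_mul_pow_four_div]
      ring
  have hF : Integrable (Function.uncurry fun α ξ ↦ sin (π * (ξ * α)) ^ 4 * g ξ / α ^ 4)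
      (volume.prod volume) := by
    have hmeas : AEStronglyMeasurable
        (Function.uncurry fun α ξ ↦ sin (π * (ξ * α)) ^ 4 * g ξ / α ^ 4) (volume.prod volume) :=
      ((by fun_prop : Continuous fun p : ℝ × ℝ ↦ sin (π * (p.2 * p.1)) ^ 4).aestronglyMeasurable.mul
        hg.comp_snd).div₀ (continuous_fst.pow 4).aestronglyMeasurable
    rw [integrable_prod_iff' hmeas]
    refine ⟨ae_of_all _ fun ξ ↦ ?_, (hint.norm.const_mul (2 * π ^ 4 / 3)).congr
      (ae_of_all _ fun ξ ↦ ?_)⟩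
    · simp_rw [Function.uncurry_apply_pair, mul_div_right_comm _ (g ξ)]
      exact (integrable_sin_pi_mul_pow_four_div ξ).mul_const _
    · simp only [Function.uncurry_apply_pair, norm_div, norm_mul, norm_pow, Real.norm_eq_abs,
        Even.pow_abs (by decide : Even 4), abs_abs]
      rw [hslice]
  rw [integral_integral_swap hF]
  simp_rw [hslice]
  rw [integral_const_mul]

theorem second_difference_plancherel (f : SchwartzMap ℝ ℂ) :
    ∫ α : ℝ, (∫ x : ℝ, ‖f (x + α) + f (x - α) - 2 * f x‖ ^ 2 / α ^ 4) =
      (32 * Real.pi ^ 4 / 3) * ∫ ξ : ℝ, |ξ| ^ 3 * ‖FourierTransform.fourier (⇑f : ℝ → ℂ) ξ‖ ^ 2 := by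
  have hplancherel : ∀ α : ℝ, ∫ x, ‖f (x + α) + f (x - α) - 2 * f x‖ ^ 2 =
      16 * ∫ ξ, sin (π * (ξ * α)) ^ 4 * ‖𝓕 (⇑f) ξ‖ ^ 2 := fun α ↦ by
    simpa [RCLike.inner_apply] using SchwartzMap.integral_norm_sq_secondDifference α f
  have hint : Integrable fun ξ : ℝ ↦ |ξ| ^ 3 * ‖𝓕 (⇑f) ξ‖ ^ 2 := by
    simpa [SchwartzMap.fourier_coe] using (𝓕 f).integrable_pow_mul_norm_sq volume 3
  calc _ = 16 * ∫ α, ∫ ξ, sin (π * (ξ * α)) ^ 4 * ‖𝓕 (⇑f) ξ‖ ^ 2 / α ^ 4 := by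
        rw [← integral_const_mul]
        congr 1 with α
        rw [integral_div, hplancherel, mul_div_assoc, integral_div]
    _ = _ := by
        rw [integral_integral_sin_pi_mul_pow_four_mul_div
          ((𝓕 f).continuous.norm.pow 2).aestronglyMeasurable hint]
        ring
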